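/- arXiv:1701.08046 — 3 statements merged into one kernel-verified Lean document; each statement's English description precedes it below -/
import Mathlib

section
/- In particular, if for some index n₀ the finite-dimensional resolvent Krylov subspace 𝒦_{n₀}((γ-A)^{-1}, v) = span{v, (γ-A)^{-1}v, ..., (γ-A)^{-(n₀-1)}v} is invariant under (γ-A)^{-1}, then for every t ≥ 0 the vector e^{tA}v lies in 𝒦_{n₀}((γ-A)^{-1}, v) exactly. -/
open Filter Topology MeasureTheory

/-- A (bounded) strongly continuous one-parameter semigroup on `X` with bound `N`. -/
structure IsC0Semigroup {X : Type*} [NormedAddCommGroup X] [NormedSpace ℂ X]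
    (T : ℝ → X →L[ℂ] X) (N : ℝ) : Prop where
  map_zero : T 0 = 1
  map_add : ∀ s t : ℝ, 0 ≤ s → 0 ≤ t → T (s + t) = (T s).comp (T t)
  strong_cont : ∀ x : X, ContinuousOn (fun t => T t x) (Set.Ici 0)
  norm_bound : ∀ t : ℝ, 0 ≤ t → ‖T t‖ ≤ N

/-- `A` (a linear extension of) the generator of the semigroup `T`, with domain `dom`. -/
structure IsGeneratorOf {X : Type*} [NormedAddCommGroup X] [NormedSpace ℂ X]
    (A : X →ₗ[ℂ] X) (dom : Set X) (T : ℝ → X →L[ℂ] X) : Prop where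
  deriv_mem : ∀ x ∈ dom,
    Tendsto (fun t : ℝ => (t : ℂ)⁻¹ • (T t x - x)) (𝓝[>] 0) (𝓝 (A x))
  mem_of_deriv : ∀ x y : X,
    Tendsto (fun t : ℝ => (t : ℂ)⁻¹ • (T t x - x)) (𝓝[>] 0) (𝓝 y) → x ∈ dom

/-- `R = (μ - A)⁻¹` : the resolvent of `A` at `μ`. -/
def IsResolventOf {X : Type*} [NormedAddCommGroup X] [NormedSpace ℂ X]
    (R : X →L[ℂ] X) (μ : ℂ) (A : X →ₗ[ℂ] X) (dom : Set X) : Prop :=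
  (∀ x : X, R x ∈ dom ∧ μ • R x - A (R x) = x) ∧
  (∀ x ∈ dom, R (μ • x - A x) = x)


/-!
The resolvent `R = (γ - A)⁻¹` is injective, so on the finite-dimensional `R`-invariant space `K`
it is bijective. Hence `K ⊆ range R ⊆ dom`, and `A = γ - (R|_K)⁻¹` maps `K` into itself. The
exponential of `A|_K` yields `u` with `u' = A u`, `u 0 = v` and `u s ∈ K`. Such a classical
solution is the semigroup orbit: `σ ↦ T σ (u (t - σ))` has vanishing right derivative on
`[0, t]`, hence `T t v = u t ∈ K`.
-/

open Set

theorem tendsto_apply_of_eventually_norm_le {α 𝕜 E F : Type*} [NontriviallyNormedField 𝕜]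
    [NormedAddCommGroup E] [NormedSpace 𝕜 E] [NormedAddCommGroup F] [NormedSpace 𝕜 F]
    {l : Filter α} {T : α → E →L[𝕜] F} {N : ℝ} {y : α → E} {y₀ : E} {z : F}
    (hN : ∀ᶠ a in l, ‖T a‖ ≤ N) (hy : Tendsto y l (𝓝 y₀))
    (hT : Tendsto (fun a => T a y₀) l (𝓝 z)) :
    Tendsto (fun a => T a (y a)) l (𝓝 z) := by
  have hsmall : Tendsto (fun a => T a (y a - y₀)) l (𝓝 0) :=
    squeeze_zero_norm' (hN.mono fun a ha => (T a).le_of_opNorm_le ha _)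
      (by simpa using ((hy.sub_const y₀).norm.const_mul N))
  simpa using hsmall.add hT

theorem hasDerivWithinAt_apply_of_eventually_norm_le {E F : Type*}
    [NormedAddCommGroup E] [NormedSpace ℂ E] [NormedAddCommGroup F] [NormedSpace ℂ F]
    {T : ℝ → E →L[ℂ] F} {u : ℝ → E} {S : Set ℝ} {s N : ℝ} {u' : E} {d : F}
    (hN : ∀ᶠ σ in 𝓝[S] s, ‖T σ‖ ≤ N) (hTu' : ContinuousWithinAt (fun σ => T σ u') S s)
    (hu : HasDerivWithinAt u u' S s) (hd : HasDerivWithinAt (fun σ => T σ (u s)) d S s) :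
    HasDerivWithinAt (fun σ => T σ (u σ)) (T s u' + d) S s := by
  rw [hasDerivWithinAt_iff_tendsto_slope] at hu hd ⊢
  have hsub : 𝓝[S \ {s}] s ≤ 𝓝[S] s := nhdsWithin_mono _ sdiff_subset
  refine (tendsto_apply_of_eventually_norm_le (hsub hN) hu (hTu'.mono_left hsub)).add hd
    |>.congr fun σ => ?_
  simp only [slope_def_module, (T σ).map_smul_of_tower, map_sub, ← smul_add, sub_add_sub_cancel]

namespace IsC0Semigroup

variable {X : Type*} [NormedAddCommGroup X] [NormedSpace ℂ X] {T : ℝ → X →L[ℂ] X} {N : ℝ}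

theorem continuousOn_apply (hT : IsC0Semigroup T N) {u : ℝ → X} (hu : ContinuousOn u (Ici 0)) :
    ContinuousOn (fun σ => T σ (u σ)) (Ici 0) := fun s hs =>
  tendsto_apply_of_eventually_norm_le
    (eventually_mem_nhdsWithin.mono fun σ hσ => hT.norm_bound σ hσ) (hu s hs)
    (hT.strong_cont (u s) s hs)

theorem hasDerivWithinAt_apply (hT : IsC0Semigroup T N) {A : X →ₗ[ℂ] X} {dom : Set X}
    (hA : IsGeneratorOf A dom T) {x : X} (hx : x ∈ dom) {s : ℝ} (hs : 0 ≤ s) :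
    HasDerivWithinAt (fun σ => T σ x) (T s (A x)) (Ici s) s := by
  rw [hasDerivWithinAt_iff_tendsto_slope, Ici_sdiff_left]
  have hshift : Tendsto (fun σ => σ - s) (𝓝[>] s) (𝓝[>] 0) :=
    tendsto_nhdsWithin_iff.2
      ⟨by simpa using ((continuous_sub_right s).tendsto s).mono_left nhdsWithin_le_nhds,
        eventually_mem_nhdsWithin.mono fun σ (hσ : s < σ) => sub_pos.2 hσ⟩
  refine ((T s).continuous.tendsto _ |>.comp ((hA.deriv_mem x hx).comp hshift)).congr' ?_
  filter_upwards [self_mem_nhdsWithin] with σ hσ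
  have hsplit : T σ = (T s).comp (T (σ - s)) := by
    simpa using hT.map_add s (σ - s) hs (sub_pos.2 hσ).le
  simp [slope_def_module, hsplit, ← Complex.ofReal_inv, Complex.coe_smul]

theorem apply_eq_of_hasDerivAt (hT : IsC0Semigroup T N) {A : X →ₗ[ℂ] X} {dom : Set X}
    (hA : IsGeneratorOf A dom T) {u : ℝ → X} (hu : ∀ s, HasDerivAt u (A (u s)) s)
    (hdom : ∀ s, u s ∈ dom) {t : ℝ} (ht : 0 ≤ t) : T t (u 0) = u t := by
  set f : ℝ → X := fun σ => T σ (u (t - σ))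
  have hu_cont : Continuous u := continuous_iff_continuousAt.2 fun s => (hu s).continuousAt
  have hf_cont : ContinuousOn f (Icc 0 t) :=
    (hT.continuousOn_apply (hu_cont.comp (continuous_sub_left t)).continuousOn).mono
      Icc_subset_Ici_self
  have hf_deriv : ∀ s ∈ Ico 0 t, HasDerivWithinAt f 0 (Ici s) s := by
    rintro s ⟨hs, -⟩
    have hback : HasDerivAt (fun σ => u (t - σ)) (-A (u (t - s))) s := by
      simpa [Function.comp_def] using (hu (t - s)).scomp s ((hasDerivAt_id s).const_sub t)
    have hf := hasDerivWithinAt_apply_of_eventually_norm_le (S := Ici s)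
      (eventually_mem_nhdsWithin.mono fun σ (hσ : s ≤ σ) => hT.norm_bound σ (hs.trans hσ))
      ((hT.strong_cont _ s hs).mono (Ici_subset_Ici.2 hs)) hback.hasDerivWithinAt
      (hT.hasDerivWithinAt_apply hA (hdom _) hs)
    simpa only [map_neg, neg_add_cancel] using hf
  have := constant_of_has_deriv_right_zero hf_cont hf_deriv t ⟨ht, le_rfl⟩
  simpa [f, hT.map_zero] using this

end IsC0Semigroup

namespace IsResolventOf

variable {X : Type*} [NormedAddCommGroup X] [NormedSpace ℂ X] {R : X →L[ℂ] X} {μ : ℂ}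
  {A : X →ₗ[ℂ] X} {dom : Set X}

theorem injective (hR : IsResolventOf R μ A dom) : Function.Injective R := fun x y h => by
  rw [← (hR.1 x).2, ← (hR.1 y).2, h]

variable {K : Submodule ℂ X} [FiniteDimensional ℂ K]

theorem exists_apply_eq_of_mapsTo (hR : IsResolventOf R μ A dom) (hK : ∀ x ∈ K, R x ∈ K)
    {x : X} (hx : x ∈ K) : ∃ y ∈ K, R y = x := by
  have hRK_inj : Function.Injective ((R : X →ₗ[ℂ] X).restrict hK) := fun a b h =>
    Subtype.ext (hR.injective (congrArg Subtype.val h))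
  obtain ⟨y, hy⟩ := LinearMap.injective_iff_surjective.1 hRK_inj ⟨x, hx⟩
  exact ⟨y, y.2, congrArg Subtype.val hy⟩

theorem mem_dom_of_mapsTo (hR : IsResolventOf R μ A dom) (hK : ∀ x ∈ K, R x ∈ K)
    {x : X} (hx : x ∈ K) : x ∈ dom := by
  obtain ⟨y, -, rfl⟩ := hR.exists_apply_eq_of_mapsTo hK hx
  exact (hR.1 y).1

theorem apply_mem_of_mapsTo (hR : IsResolventOf R μ A dom) (hK : ∀ x ∈ K, R x ∈ K)
    {x : X} (hx : x ∈ K) : A x ∈ K := by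
  obtain ⟨y, hyK, rfl⟩ := hR.exists_apply_eq_of_mapsTo hK hx
  have hAy : A (R y) = μ • R y - y :=
    (sub_sub_cancel (μ • R y) (A (R y))).symm.trans (by rw [(hR.1 y).2])
  rw [hAy]
  exact K.sub_mem (K.smul_mem μ hx) hyK

end IsResolventOf

theorem ContinuousLinearMap.exists_hasDerivAt_eq_apply {E : Type*} [NormedAddCommGroup E]
    [NormedSpace ℂ E] [CompleteSpace E] (B : E →L[ℂ] E) (x : E) :
    ∃ w : ℝ → E, w 0 = x ∧ ∀ s, HasDerivAt w (B (w s)) s := by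
  refine ⟨fun s => NormedSpace.exp (s • B) x, by simp, fun s => ?_⟩
  have hexp := hasDerivAt_exp_smul_const' B s
  simpa [Function.comp_def] using
    ((ContinuousLinearMap.apply ℂ E x).restrictScalars ℝ).hasFDerivAt.comp_hasDerivAt s hexp

theorem Submodule.exists_hasDerivAt_mem_of_mapsTo {E : Type*} [NormedAddCommGroup E]
    [NormedSpace ℂ E] (K : Submodule ℂ E) [FiniteDimensional ℂ K] {A : E →ₗ[ℂ] E}
    (hA : ∀ x ∈ K, A x ∈ K) {v : E} (hv : v ∈ K) :
    ∃ u : ℝ → E, u 0 = v ∧ (∀ s, u s ∈ K) ∧ ∀ s, HasDerivAt u (A (u s)) s := by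
  have : CompleteSpace K := FiniteDimensional.complete ℂ K
  obtain ⟨w, hw0, hw⟩ :=
    (LinearMap.toContinuousLinearMap (A.restrict hA)).exists_hasDerivAt_eq_apply ⟨v, hv⟩
  refine ⟨fun s => w s, by simp [hw0], fun s => (w s).2, fun s => ?_⟩
  exact (K.subtypeL.restrictScalars ℝ).hasFDerivAt.comp_hasDerivAt s (hw s)

theorem stmt_6_general {X : Type*} [NormedAddCommGroup X] [NormedSpace ℂ X]
    (T : ℝ → X →L[ℂ] X) (N : ℝ) (hT : IsC0Semigroup T N)
    (A : X →ₗ[ℂ] X) (dom : Set X) (hA : IsGeneratorOf A dom T)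
    (γ : ℝ) (R : X →L[ℂ] X) (hR : IsResolventOf R (γ : ℂ) A dom)
    (v : X) (n₀ : ℕ) (hn₀ : 1 ≤ n₀)
    (K : Submodule ℂ X)
    (hK : K = Submodule.span ℂ (Set.range fun k : Fin n₀ => (R ^ (k : ℕ)) v))
    (hinv : ∀ x ∈ K, R x ∈ K) :
    ∀ t : ℝ, 0 ≤ t → T t v ∈ K := by
  intro t ht
  have hvK : v ∈ K := hK ▸ Submodule.subset_span ⟨⟨0, hn₀⟩, by simp⟩
  have : FiniteDimensional ℂ K := hK ▸ FiniteDimensional.span_of_finite ℂ (Set.finite_range _)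
  obtain ⟨u, rfl, huK, hu⟩ :=
    K.exists_hasDerivAt_mem_of_mapsTo (fun x hx => hR.apply_mem_of_mapsTo hinv hx) hvK
  rw [hT.apply_eq_of_hasDerivAt hA hu (fun s => hR.mem_dom_of_mapsTo hinv (huK s)) ht]
  exact huK t

/-- If the finite-dimensional resolvent Krylov subspace
`𝒦_{n₀} = span{v, (γ-A)^{-1}v, ..., (γ-A)^{-(n₀-1)}v}` is invariant under `(γ-A)^{-1}`,
then `e^{tA} v ∈ 𝒦_{n₀}` exactly, for every `t ≥ 0`. -/
theorem stmt_6 {X : Type*} [NormedAddCommGroup X] [NormedSpace ℂ X] [CompleteSpace X]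
    (T : ℝ → X →L[ℂ] X) (N : ℝ) (hT : IsC0Semigroup T N)
    (A : X →ₗ[ℂ] X) (dom : Set X) (hA : IsGeneratorOf A dom T)
    (γ : ℝ) (hγ : 0 < γ) (R : X →L[ℂ] X) (hR : IsResolventOf R (γ : ℂ) A dom)
    (v : X) (n₀ : ℕ) (hn₀ : 1 ≤ n₀)
    (K : Submodule ℂ X)
    (hK : K = Submodule.span ℂ (Set.range fun k : Fin n₀ => (R ^ (k : ℕ)) v))
    (hinv : ∀ x ∈ K, R x ∈ K) :
    ∀ t : ℝ, 0 ≤ t → T t v ∈ K :=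
  stmt_6_general T N hT A dom hA γ R hR v n₀ hn₀ K hK hinv
end

section
/- Let q ≥ 1 and h_k^q = C(2q-1,k) C(k-1,k-q) (-1)^{k-q} for q ≤ k ≤ 2q-1. Then the function g(z) := (1 - Σ_{k=q}^{2q-1} h_k^q (1-z)^{-k}) / z^q extends to a function holomorphic on ℂ \ {1}; equivalently, the function z ↦ 1 - Σ_{k=q}^{2q-1} h_k^q (1-z)^{-k} has a zero of order at least q at z = 0. -/
/-!
With `n = 2q - 1` and `x = (1 - z)⁻¹`, the sum `∑ h_k^q x^k` is the upper tail
`∑_{ν ≥ q} C(n,ν) x^ν (1-x)^(n-ν)` of the Bernstein partition of unity `(x + (1 - x))^n = 1`.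
Hence `1 - ∑ h_k^q x^k` is the lower tail `∑_{ν < q}`, every term of which is divisible by
`(1 - x)^q`; and `1 - x = z / (z - 1)`. Comparing coefficients, the tail identity reduces to
the partial alternating sums `∑_{ν ≥ q} (-1)^(m-ν) C(m,ν) = (-1)^(m-q) C(m-1,m-q)`.
-/

/-- The coefficients `h_k^q = C(2q-1,k) C(k-1,k-q) (-1)^{k-q}`. -/
noncomputable def hCoef (q k : ℕ) : ℂ :=
  ((2 * q - 1).choose k : ℂ) * ((k - 1).choose (k - q) : ℂ) * (-1) ^ (k - q)

open Finset Polynomial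

section

variable {R : Type*} [CommRing R]

theorem sum_Icc_neg_one_pow_mul_choose {q m : ℕ} (h : q ≤ m) :
    ∑ ν ∈ Icc q m, (-1 : R) ^ (m - ν) * m.choose ν = (-1) ^ (m - q) * (m - 1).choose (m - q) := by
  obtain rfl | ⟨N, rfl⟩ : m = 0 ∨ ∃ N, m = N + 1 := by rcases m with _ | N <;> simp
  · obtain rfl : q = 0 := by omega
    simp
  have reflect : ∑ ν ∈ Icc q (N + 1), (-1 : R) ^ (N + 1 - ν) * (N + 1).choose ν
      = ∑ k ∈ range (N + 1 - q + 1), (-1 : R) ^ k * (N + 1).choose k := by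
    refine sum_nbij' (N + 1 - ·) (N + 1 - ·) ?_ ?_ ?_ ?_ fun k hk => ?_
    any_goals intro k hk; simp only [mem_Icc, mem_range] at hk ⊢; omega
    rw [Nat.choose_symm (mem_Icc.1 hk).2]
  have partial_sum := congrArg (Int.cast : ℤ → R)
    (Int.alternating_sum_range_choose_eq_choose (n := N) (m := N + 1 - q))
  push_cast at partial_sum
  rw [reflect, Nat.add_sub_cancel, partial_sum]

theorem coeff_one_sub_X_pow (N i : ℕ) :
    ((1 - X : R[X]) ^ N).coeff i = (-1) ^ i * N.choose i := by
  rw [sub_eq_add_neg, add_comm, add_pow, finsetSum_coeff]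
  have monomial (m : ℕ) : (-X : R[X]) ^ m * 1 ^ (N - m) * (N.choose m : R[X]) =
      C ((-1 : R) ^ m * N.choose m) * X ^ m := by
    rw [neg_pow (X : R[X]) m, one_pow, mul_one, C_mul, C_pow, C_neg, C_1, ← map_natCast C]
    ring
  simp only [monomial, coeff_C_mul_X_pow, sum_ite_eq, mem_range]
  split_ifs with h
  · rfl
  · rw [Nat.choose_eq_zero_of_lt (by omega), Nat.cast_zero, mul_zero]

theorem coeff_bernsteinPolynomial (n ν m : ℕ) :
    (bernsteinPolynomial R n ν).coeff m = (-1) ^ (m - ν) * (n.choose m * m.choose ν : ℕ) := by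
  rw [bernsteinPolynomial, ← map_natCast C, mul_assoc, coeff_C_mul, coeff_X_pow_mul',
    coeff_one_sub_X_pow]
  split_ifs with h
  · rw [Nat.choose_mul h]
    push_cast
    ring
  · rw [Nat.choose_eq_zero_of_lt (not_le.mp h)]
    simp

theorem sum_Icc_bernsteinPolynomial (q n : ℕ) :
    ∑ ν ∈ Icc q n, bernsteinPolynomial R n ν =
      ∑ k ∈ Icc q n, C ((n.choose k : R) * (k - 1).choose (k - q) * (-1) ^ (k - q)) * X ^ k := by
  ext m
  simp only [finsetSum_coeff, coeff_bernsteinPolynomial, coeff_C_mul_X_pow, sum_ite_eq, mem_Icc]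
  by_cases hmn : m ≤ n
  swap
  · simp [Nat.choose_eq_zero_of_lt (not_le.mp hmn), hmn]
  rw [← sum_subset (Icc_subset_Icc_right hmn) fun ν hν hνm => by
    rw [Nat.choose_eq_zero_of_lt (by simp at hν hνm; omega : m < ν)]; simp]
  by_cases hqm : q ≤ m
  · simp only [Nat.cast_mul, mul_left_comm _ (n.choose m : R), ← mul_sum,
      sum_Icc_neg_one_pow_mul_choose hqm, hqm, hmn, and_self, if_true]
    ring
  · simp [hqm, Icc_eq_empty hqm]

theorem one_sub_X_pow_dvd_one_sub_sum_Icc (q n : ℕ) :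
    (1 - X : R[X]) ^ (n + 1 - q) ∣
      1 - ∑ k ∈ Icc q n, C ((n.choose k : R) * (k - 1).choose (k - q) * (-1) ^ (k - q)) * X ^ k := by
  rcases lt_or_ge (n + 1) q with hnq | hqn
  · rw [Nat.sub_eq_zero_of_le hnq.le, pow_zero]
    exact one_dvd _
  have lower_tail : 1 - ∑ ν ∈ Icc q n, bernsteinPolynomial R n ν =
      ∑ ν ∈ range q, bernsteinPolynomial R n ν := by
    rw [← bernsteinPolynomial.sum R n, ← sum_range_add_sum_Ico _ hqn, Ico_add_one_right_eq_Icc,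
      add_sub_cancel_right]
  rw [← sum_Icc_bernsteinPolynomial, lower_tail]
  refine dvd_sum fun ν hν => ?_
  rw [bernsteinPolynomial]
  exact dvd_mul_of_dvd_right (pow_dvd_pow _ (by rw [mem_range] at hν; omega)) _

end

/-- The function `g(z) = (1 - Σ_{k=q}^{2q-1} h_k^q (1-z)^{-k}) / z^q` extends to a
holomorphic function on `ℂ \ {1}`; i.e. `1 - Σ h_k^q (1-z)^{-k}` has a zero of order ≥ q at 0. -/
theorem stmt_8 (q : ℕ) (hq : 1 ≤ q) :
    ∃ g : ℂ → ℂ, DifferentiableOn ℂ g {z : ℂ | z ≠ 1} ∧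
      ∀ z : ℂ, z ≠ 1 → z ≠ 0 →
        g z = (1 - ∑ k ∈ Finset.Icc q (2 * q - 1), hCoef q k * ((1 - z)⁻¹) ^ k) / z ^ q := by
  obtain ⟨Q, hQ⟩ : (1 - X : ℂ[X]) ^ q ∣ 1 - ∑ k ∈ Icc q (2 * q - 1), C (hCoef q k) * X ^ k := by
    simpa only [hCoef, show 2 * q - 1 + 1 - q = q by omega] using
      one_sub_X_pow_dvd_one_sub_sum_Icc (R := ℂ) q (2 * q - 1)
  refine ⟨fun z => ((z - 1)⁻¹) ^ q * Q.eval (1 - z)⁻¹, fun z hz => ?_, fun z hz1 hz0 => ?_⟩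
  · have : z - 1 ≠ 0 := sub_ne_zero.2 hz
    have : 1 - z ≠ 0 := sub_ne_zero.2 (Ne.symm hz)
    fun_prop (disch := assumption)
  · have hx : 1 - (1 - z)⁻¹ = z * (z - 1)⁻¹ := by
      field_simp [sub_ne_zero.2 (Ne.symm hz1), sub_ne_zero.2 hz1]
      ring
    have hQz := congrArg (eval (1 - z)⁻¹) hQ
    simp only [eval_sub, eval_one, eval_finsetSum, eval_mul, eval_C, eval_pow, eval_X, hx] at hQz
    rw [hQz, eq_div_iff (pow_ne_zero q hz0)]
    ring
end

section
/- Let A generate a contraction C_0-semigroup on a Hilbert space H, fix γ > 0 and v ∈ 𝒟(A), let P_n be the orthogonal projection onto the resolvent Krylov subspace 𝒦_n((γ-A)^{-1}, v) ⊆ 𝒟(A), and A_n = P_n A P_n. Then the Krylov approximation is exact for rational functions with denominator (γ - z)^{n-1}: for every polynomial p of degree ≤ n-1, p(A)(γ-A)^{-(n-1)} v = p(A_n)(γ - A_n)^{-(n-1)} v. -/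
/-!
Write `w k = R^k v` with `R = (γ - A)⁻¹`. From `A R = γ R - 1` we get
`A w (k+1) = γ w (k+1) - w k`, so `A` maps `span {w i | k + 1 ≤ i < n}` into
`span {w i | k ≤ i < n} ⊆ 𝒦_n`. On such vectors the compression `A_n = P_n A P_n` agrees with `A`,
because `P_n` fixes `𝒦_n`. Consequently `(γ - A_n) w (k+1) = w k`, i.e. `R_n^k v = R^k v` for
`k < n`, and `A_n^j w (n-1) = A^j w (n-1)` for `j ≤ n - 1`, which gives the claim for every `p`
of degree at most `n - 1`.
-/

open Filter Topology MeasureTheory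

open Set Polynomial

namespace Module.End

theorem pow_apply_eq_of_eqOn_succ {R M : Type*} [Semiring R] [AddCommMonoid M] [Module R M]
    {A B : Module.End R M} {S : ℕ → Set M} (hA : ∀ k, MapsTo A (S (k + 1)) (S k))
    (hB : ∀ k, EqOn B A (S (k + 1))) (j k : ℕ) {x : M} (hx : x ∈ S (k + j)) :
    (B ^ j) x = (A ^ j) x := by
  induction j generalizing x with
  | zero => rfl
  | succ j ih =>
    rw [← add_assoc] at hx
    rw [pow_succ, pow_succ, mul_apply, mul_apply, hB _ hx, ih (hA _ hx)]

theorem aeval_apply_eq_of_eqOn_succ {R M : Type*} [CommSemiring R] [AddCommMonoid M]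
    [Module R M] {A B : Module.End R M} {S : ℕ → Set M} (hA : ∀ k, MapsTo A (S (k + 1)) (S k))
    (hB : ∀ k, EqOn B A (S (k + 1))) {p : R[X]} {m : ℕ} (hp : p.natDegree ≤ m) {x : M}
    (hx : x ∈ S m) : aeval B p x = aeval A p x := by
  simp only [aeval_eq_sum_range, LinearMap.sum_apply, LinearMap.smul_apply]
  refine Finset.sum_congr rfl fun i hi => ?_
  have him : i ≤ m := (Nat.lt_succ_iff.mp (Finset.mem_range.mp hi)).trans hp
  rw [pow_apply_eq_of_eqOn_succ hA hB i (m - i) (by rwa [Nat.sub_add_cancel him])]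

end Module.End

section Krylov

variable {X : Type*} [NormedAddCommGroup X] [NormedSpace ℂ X]

def krylovSpan (R : X →L[ℂ] X) (v : X) (k n : ℕ) : Submodule ℂ X :=
  Submodule.span ℂ ((fun i => (R ^ i) v) '' Ico k n)

variable {R : X →L[ℂ] X} {v : X} {k n : ℕ}

theorem krylovSpan_zero :
    krylovSpan R v 0 n = Submodule.span ℂ (range fun i : Fin n => (R ^ (i : ℕ)) v) := by
  unfold krylovSpan
  congr 1
  ext x
  simp only [mem_image, mem_Ico, mem_range, Fin.exists_iff, zero_le, true_and, exists_prop]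

theorem krylovSpan_le_krylovSpan {j : ℕ} (hjk : j ≤ k) :
    krylovSpan R v k n ≤ krylovSpan R v j n :=
  Submodule.span_mono (image_mono (Ico_subset_Ico_left hjk))

theorem pow_apply_mem_krylovSpan {i : ℕ} (hki : k ≤ i) (hin : i < n) :
    (R ^ i) v ∈ krylovSpan R v k n :=
  Submodule.subset_span ⟨i, ⟨hki, hin⟩, rfl⟩

variable {μ : ℂ} {A : X →ₗ[ℂ] X} {dom : Set X}

theorem IsResolventOf.apply_apply (hR : IsResolventOf R μ A dom) (x : X) :
    A (R x) = μ • R x - x :=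
  calc A (R x) = μ • R x - (μ • R x - A (R x)) := (sub_sub_cancel _ _).symm
    _ = μ • R x - x := by rw [(hR.1 x).2]

theorem IsResolventOf.mapsTo_krylovSpan (hR : IsResolventOf R μ A dom) (k : ℕ) :
    MapsTo A (krylovSpan R v (k + 1) n) (krylovSpan R v k n) := by
  refine fun x hx => (Submodule.span_le (p := (krylovSpan R v k n).comap A)).mpr ?_ hx
  rintro _ ⟨i, ⟨hki, hin⟩, rfl⟩
  obtain ⟨i, rfl⟩ : ∃ j, i = j + 1 := ⟨i - 1, by omega⟩
  have hAi : A ((R ^ (i + 1)) v) = μ • (R ^ (i + 1)) v - (R ^ i) v := by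
    rw [pow_succ', mul_apply_eq_comp, hR.apply_apply]
  rw [SetLike.mem_coe, Submodule.mem_comap, hAi]
  exact sub_mem (Submodule.smul_mem _ _ (pow_apply_mem_krylovSpan (by omega) hin))
    (pow_apply_mem_krylovSpan (by omega) (by omega))

theorem IsResolventOf.apply_eq_of_leftInverse (hR : IsResolventOf R μ A dom) {K : Submodule ℂ X}
    {B Rn : X →L[ℂ] X} (hRn : ∀ x ∈ K, Rn (μ • x - B x) = x) {y : X} (hy : R y ∈ K)
    (hB : B (R y) = A (R y)) : Rn y = R y := by
  rw [← hRn _ hy, hB, (hR.1 y).2]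

theorem IsResolventOf.pow_apply_eq_of_eqOn (hR : IsResolventOf R μ A dom) {B Rn : X →L[ℂ] X}
    (hB : ∀ k, EqOn B A (krylovSpan R v (k + 1) n))
    (hRn : ∀ x ∈ krylovSpan R v 0 n, Rn (μ • x - B x) = x) (hk : k < n) :
    (Rn ^ k) v = (R ^ k) v := by
  induction k with
  | zero => rfl
  | succ k ih =>
    have hmem : R ((R ^ k) v) ∈ krylovSpan R v (k + 1) n := by
      simpa only [pow_succ', mul_apply_eq_comp] using pow_apply_mem_krylovSpan le_rfl hk
    rw [pow_succ', pow_succ', mul_apply_eq_comp, mul_apply_eq_comp, ih (by omega)]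
    exact hR.apply_eq_of_leftInverse hRn (krylovSpan_le_krylovSpan k.succ.zero_le hmem) (hB k hmem)

end Krylov

theorem compression_apply_of_mem {H : Type*} [NormedAddCommGroup H] [InnerProductSpace ℂ H]
    {K : Submodule ℂ H} [K.HasOrthogonalProjection] {A : H →ₗ[ℂ] H} {P An : H →L[ℂ] H}
    (hP : ∀ x : H, P x = (Submodule.orthogonalProjectionOnto K x : H))
    (hAn : ∀ x : H, An x = P (A (P x))) {x : H} (hx : x ∈ K) (hAx : A x ∈ K) :
    An x = A x := by
  have hPK : ∀ y ∈ K, P y = y := fun y hy =>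
    (hP y).trans (Submodule.starProjection_eq_self_iff.mpr hy)
  rw [hAn, hPK x hx, hPK _ hAx]

theorem stmt_19_general {H : Type*} [NormedAddCommGroup H] [InnerProductSpace ℂ H]
    (A : H →ₗ[ℂ] H) (dom : Set H)
    (γ : ℝ) (R : H →L[ℂ] H) (hR : IsResolventOf R (γ : ℂ) A dom)
    (v : H) (n : ℕ)
    (K : Submodule ℂ H)
    (hK : K = Submodule.span ℂ (Set.range fun k : Fin n => (R ^ (k : ℕ)) v))
    [FiniteDimensional ℂ K]
    (P : H →L[ℂ] H) (hP : ∀ x : H, P x = (Submodule.orthogonalProjectionOnto K x : H))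
    (An : H →L[ℂ] H) (hAn : ∀ x : H, An x = P (A (P x)))
    (Rn : H →L[ℂ] H)
    (hRn2 : ∀ x ∈ K, Rn ((γ : ℂ) • x - An x) = x)
    (p : Polynomial ℂ) (hp : p.natDegree ≤ n - 1) :
    (Polynomial.aeval (A : Module.End ℂ H) p) ((R ^ (n - 1)) v)
      = (Polynomial.aeval (An.toLinearMap : Module.End ℂ H) p) ((Rn ^ (n - 1)) v) := by
  rcases n with _ | m
  · obtain ⟨c, rfl⟩ := natDegree_eq_zero.mp (Nat.le_zero.mp hp)
    simp
  rw [← krylovSpan_zero] at hK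
  subst hK
  have hEq : ∀ k, EqOn An A (krylovSpan R v (k + 1) (m + 1)) := fun k x hx =>
    compression_apply_of_mem hP hAn (krylovSpan_le_krylovSpan k.succ.zero_le hx)
      (krylovSpan_le_krylovSpan k.zero_le (hR.mapsTo_krylovSpan k hx))
  rw [Nat.add_sub_cancel] at hp ⊢
  rw [hR.pow_apply_eq_of_eqOn hEq hRn2 m.lt_succ_self]
  exact (Module.End.aeval_apply_eq_of_eqOn_succ (S := fun k => krylovSpan R v k (m + 1))
    hR.mapsTo_krylovSpan hEq hp (pow_apply_mem_krylovSpan le_rfl m.lt_succ_self)).symm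

/-- Exactness of the resolvent Krylov approximation for rational functions with
denominator `(γ-z)^{n-1}`: with `P_n` the orthogonal projection onto
`𝒦_n((γ-A)^{-1}, v) ⊆ 𝒟(A)`, `A_n = P_n A P_n`, and `(γ - A_n)^{-1}` its resolvent on `𝒦_n`,
for every polynomial `p` of degree ≤ n-1: `p(A)(γ-A)^{-(n-1)} v = p(A_n)(γ-A_n)^{-(n-1)} v`. -/
theorem stmt_19 {H : Type*} [NormedAddCommGroup H] [InnerProductSpace ℂ H] [CompleteSpace H]
    (T : ℝ → H →L[ℂ] H) (hT : IsC0Semigroup T 1)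
    (A : H →ₗ[ℂ] H) (dom : Set H) (hA : IsGeneratorOf A dom T)
    (γ : ℝ) (hγ : 0 < γ) (R : H →L[ℂ] H) (hR : IsResolventOf R (γ : ℂ) A dom)
    (v : H) (hv : v ∈ dom) (n : ℕ) (hn : 1 ≤ n)
    (K : Submodule ℂ H)
    (hK : K = Submodule.span ℂ (Set.range fun k : Fin n => (R ^ (k : ℕ)) v))
    [FiniteDimensional ℂ K] (hKdom : (K : Set H) ⊆ dom)
    (P : H →L[ℂ] H) (hP : ∀ x : H, P x = (Submodule.orthogonalProjectionOnto K x : H))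
    (An : H →L[ℂ] H) (hAn : ∀ x : H, An x = P (A (P x)))
    (Rn : H →L[ℂ] H)
    (hRn1 : ∀ x ∈ K, Rn x ∈ K ∧ (γ : ℂ) • Rn x - An (Rn x) = x)
    (hRn2 : ∀ x ∈ K, Rn ((γ : ℂ) • x - An x) = x)
    (p : Polynomial ℂ) (hp : p.natDegree ≤ n - 1) :
    (Polynomial.aeval (A : Module.End ℂ H) p) ((R ^ (n - 1)) v)
      = (Polynomial.aeval (An.toLinearMap : Module.End ℂ H) p) ((Rn ^ (n - 1)) v) :=
  stmt_19_general A dom γ R hR v n K hK P hP An hAn Rn hRn2 p hp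
end
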